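/- Let f : Σ → ℝ³ be a conformal immersion with induced metric g = e^λ|dz|², unit normal ν, mean curvature H, Hopf differential φ = 2⟨f_{zz}, ν⟩, and conformal Gauss map Y = H·X + N into the quadric Q⁴ ⊂ ℝ^{4,1}. Then in local complex coordinates, ⟨Y_{zz}, Y_{zz}⟩ = φ H_{zz} − H_z (φ e^{−λ})_z e^λ + φ² H²/4. -/

import Mathlib

/-- The Wirtinger derivative `∂_z f = (∂_x f − i ∂_y f)/2`. -/
noncomputable def wderiv (f : ℂ → ℂ) (z : ℂ) : ℂ :=
  (fderiv ℝ f z 1 - Complex.I * fderiv ℝ f z Complex.I) / 2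

/-- The Wirtinger derivative `∂_z̄ f = (∂_x f + i ∂_y f)/2`. -/
noncomputable def wderivBar (f : ℂ → ℂ) (z : ℂ) : ℂ :=
  (fderiv ℝ f z 1 + Complex.I * fderiv ℝ f z Complex.I) / 2

/-- Componentwise Wirtinger derivative of a `ℂ³`-valued map. -/
noncomputable def wderiv3 (F : ℂ → Fin 3 → ℂ) (z : ℂ) : Fin 3 → ℂ :=
  fun i => wderiv (fun w => F w i) z

/-- Componentwise Wirtinger derivative of a `ℂ⁵`-valued map. -/
noncomputable def wderiv5 (F : ℂ → Fin 5 → ℂ) (z : ℂ) : Fin 5 → ℂ :=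
  fun i => wderiv (fun w => F w i) z

/-- Complex-bilinear extension of the Euclidean product on ℝ³. -/
noncomputable def dot3 (a b : Fin 3 → ℂ) : ℂ := ∑ i, a i * b i

/-- Complex-bilinear extension of the Lorentzian product on ℝ^{4,1}. -/
noncomputable def ldot5 (a b : Fin 5 → ℂ) : ℂ :=
  a 0 * b 0 + a 1 * b 1 + a 2 * b 2 + a 3 * b 3 - a 4 * b 4



section toolkit
variable {f g : ℂ → ℂ} {z : ℂ} {c : ℂ}

lemma wderiv_const (c z : ℂ) : wderiv (fun _ => c) z = 0 := by
  simp [wderiv]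

lemma wderiv_add (hf : DifferentiableAt ℝ f z) (hg : DifferentiableAt ℝ g z) :
    wderiv (fun w => f w + g w) z = wderiv f z + wderiv g z := by
  simp only [wderiv, fderiv_fun_add hf hg, ContinuousLinearMap.add_apply]; ring

lemma wderiv_neg : wderiv (fun w => -f w) z = - wderiv f z := by
  simp only [wderiv, fderiv_fun_neg, ContinuousLinearMap.neg_apply]; ring

lemma wderiv_sub (hf : DifferentiableAt ℝ f z) (hg : DifferentiableAt ℝ g z) :
    wderiv (fun w => f w - g w) z = wderiv f z - wderiv g z := by
  simp only [wderiv, fderiv_fun_sub hf hg, ContinuousLinearMap.sub_apply]; ring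

lemma wderiv_mul (hf : DifferentiableAt ℝ f z) (hg : DifferentiableAt ℝ g z) :
    wderiv (fun w => f w * g w) z = wderiv f z * g z + f z * wderiv g z := by
  simp only [wderiv, fderiv_fun_mul hf hg, ContinuousLinearMap.add_apply,
    ContinuousLinearMap.smul_apply, smul_eq_mul]; ring

lemma wderiv_const_mul (hf : DifferentiableAt ℝ f z) :
    wderiv (fun w => c * f w) z = c * wderiv f z := by
  simp only [wderiv, fderiv_const_mul hf, ContinuousLinearMap.smul_apply, smul_eq_mul]; ring

lemma wderiv_div_const (hf : DifferentiableAt ℝ f z) :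
    wderiv (fun w => f w / c) z = wderiv f z / c := by
  rw [show (fun w => f w / c) = fun w => c⁻¹ * f w by funext w; ring, wderiv_const_mul hf]
  ring

lemma wderivBar_add (hf : DifferentiableAt ℝ f z) (hg : DifferentiableAt ℝ g z) :
    wderivBar (fun w => f w + g w) z = wderivBar f z + wderivBar g z := by
  simp only [wderivBar, fderiv_fun_add hf hg, ContinuousLinearMap.add_apply]; ring

lemma wderivBar_const_mul (hf : DifferentiableAt ℝ f z) :
    wderivBar (fun w => c * f w) z = c * wderivBar f z := by
  simp only [wderivBar, fderiv_const_mul hf, ContinuousLinearMap.smul_apply, smul_eq_mul]; ring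

lemma wderivBar_div_const (hf : DifferentiableAt ℝ f z) :
    wderivBar (fun w => f w / c) z = wderivBar f z / c := by
  rw [show (fun w => f w / c) = fun w => c⁻¹ * f w by funext w; ring, wderivBar_const_mul hf]
  ring

lemma wderiv_congr_nhds (h : f =ᶠ[nhds z] g) : wderiv f z = wderiv g z := by
  simp only [wderiv, h.fderiv_eq]

lemma wderiv_congr_on {U : Set ℂ} (hU : IsOpen U) (h : ∀ w ∈ U, f w = g w) (hz : z ∈ U) :
    wderiv f z = wderiv g z :=
  wderiv_congr_nhds (Filter.eventually_of_mem (hU.mem_nhds hz) h)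

lemma ContDiff.wderiv' (hf : ContDiff ℝ (⊤ : ℕ∞) f) : ContDiff ℝ (⊤ : ℕ∞) (fun z => wderiv f z) := by
  have h1 : ContDiff ℝ (⊤ : ℕ∞) (fun z => fderiv ℝ f z) := hf.fderiv_right (by simp)
  exact ((h1.clm_apply contDiff_const).sub
    (contDiff_const.mul (h1.clm_apply contDiff_const))).div_const 2

lemma ContDiff.wderivBar' (hf : ContDiff ℝ (⊤ : ℕ∞) f) : ContDiff ℝ (⊤ : ℕ∞) (fun z => wderivBar f z) := by
  have h1 : ContDiff ℝ (⊤ : ℕ∞) (fun z => fderiv ℝ f z) := hf.fderiv_right (by simp)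
  exact ((h1.clm_apply contDiff_const).add
    (contDiff_const.mul (h1.clm_apply contDiff_const))).div_const 2

lemma ContDiff.wderiv_diffAt (hf : ContDiff ℝ (⊤ : ℕ∞) f) : DifferentiableAt ℝ f z :=
  (hf.differentiable (by simp)).differentiableAt

lemma wderiv_wderivBar_comm (hf : ContDiff ℝ (⊤ : ℕ∞) f) (z : ℂ) :
    wderiv (fun w => wderivBar f w) z = wderivBar (fun w => wderiv f w) z := by
  have hdf : ContDiff ℝ (⊤ : ℕ∞) (fun z => fderiv ℝ f z) := hf.fderiv_right (by simp)
  have hdu : ∀ u : ℂ, ContDiff ℝ (⊤ : ℕ∞) (fun w => fderiv ℝ f w u) :=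
    fun u => hdf.clm_apply contDiff_const
  have key : ∀ u v : ℂ, fderiv ℝ (fun w => fderiv ℝ f w u) z v
      = fderiv ℝ (fderiv ℝ f) z v u := by
    intro u v
    rw [fderiv_clm_apply (hdf.differentiable (by simp)).differentiableAt
      (differentiableAt_const u)]
    simp
  have hsymm : IsSymmSndFDerivAt ℝ f z := (hf.contDiffAt).isSymmSndFDerivAt (by rw [minSmoothness_of_isRCLikeNormedField]; exact WithTop.coe_le_coe.mpr (le_top : (2 : ℕ∞) ≤ ⊤))
  have hIsymm := hsymm 1 Complex.I
  have e1 : wderiv (fun w => wderivBar f w) z =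
      (wderiv (fun w => fderiv ℝ f w 1) z + Complex.I * wderiv (fun w => fderiv ℝ f w Complex.I) z) / 2 := by
    have : (fun w => wderivBar f w)
        = fun w => (fderiv ℝ f w 1 + Complex.I * fderiv ℝ f w Complex.I) / 2 := rfl
    rw [this, wderiv_div_const (((hdu 1).add (contDiff_const.mul (hdu Complex.I))).wderiv_diffAt),
      wderiv_add (hdu 1).wderiv_diffAt (contDiff_const.mul (hdu Complex.I)).wderiv_diffAt,
      wderiv_const_mul (hdu Complex.I).wderiv_diffAt]
  have e2 : wderivBar (fun w => wderiv f w) z =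
      (wderivBar (fun w => fderiv ℝ f w 1) z - Complex.I * wderivBar (fun w => fderiv ℝ f w Complex.I) z) / 2 := by
    have : (fun w => wderiv f w)
        = fun w => (fderiv ℝ f w 1 - Complex.I * fderiv ℝ f w Complex.I) / 2 := rfl
    rw [this]
    rw [show (fun w => (fderiv ℝ f w 1 - Complex.I * fderiv ℝ f w Complex.I) / 2)
        = fun w => (fderiv ℝ f w 1 + (-Complex.I) * fderiv ℝ f w Complex.I) / 2 by
      funext w; ring]
    rw [wderivBar_div_const (((hdu 1).add (contDiff_const.mul (hdu Complex.I))).wderiv_diffAt),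
      wderivBar_add (hdu 1).wderiv_diffAt (contDiff_const.mul (hdu Complex.I)).wderiv_diffAt,
      wderivBar_const_mul (hdu Complex.I).wderiv_diffAt]
    ring
  rw [e1, e2]
  simp only [wderiv, wderivBar, key]
  rw [hIsymm]
  ring
end toolkit


lemma dot3_comm (a b : Fin 3 → ℂ) : dot3 a b = dot3 b a := by
  simp [dot3, Fin.sum_univ_three]; ring

lemma conj_dot3 (a b : Fin 3 → ℂ) :
    dot3 (fun i => (starRingEnd ℂ) (a i)) (fun i => (starRingEnd ℂ) (b i))
      = (starRingEnd ℂ) (dot3 a b) := by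
  simp [dot3, Fin.sum_univ_three]

lemma conj_wderiv_real {g : ℂ → ℂ} (hg : ContDiff ℝ (⊤ : ℕ∞) g) (hreal : ∀ w, (g w).im = 0) (z : ℂ) :
    (starRingEnd ℂ) (wderiv g z) = wderivBar g z := by
  have hgd : Differentiable ℝ g := hg.differentiable (by simp)
  have hh : Differentiable ℝ (fun w => (g w).re) :=
    fun w => (Complex.reCLM.differentiable.comp hgd) w
  have hge : g = fun w => Complex.ofRealCLM ((g w).re) := by
    funext w
    apply Complex.ext <;> simp [hreal w]
  have hfd : ∀ v : ℂ, fderiv ℝ g z v = ((fderiv ℝ (fun w => (g w).re) z v : ℝ) : ℂ) := by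
    intro v
    conv_lhs => rw [hge]
    rw [show (fun w => Complex.ofRealCLM ((g w).re)) = ⇑Complex.ofRealCLM ∘ fun w => (g w).re
      from rfl]
    rw [(Complex.ofRealCLM.hasFDerivAt.comp z (hh z).hasFDerivAt).fderiv]
    simp
  simp only [wderiv, wderivBar, hfd, map_div₀, map_sub, map_add, map_mul, Complex.conj_I,
    Complex.conj_ofReal, map_ofNat]
  ring

lemma basis_expand (a b n v : Fin 3 → ℂ) (μ : ℂ) (hμ : μ ≠ 0)
    (haa : dot3 a a = 0) (hbb : dot3 b b = 0) (hab : dot3 a b = μ)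
    (han : dot3 a n = 0) (hbn : dot3 b n = 0) (hnn : dot3 n n = 1)
    (ca cb cn : ℂ) (hca : dot3 v b = ca * μ) (hcb : dot3 v a = cb * μ)
    (hcn : dot3 v n = cn) :
    ∀ i, v i = ca * a i + cb * b i + cn * n i := by
  have haa' : a 0 * a 0 + a 1 * a 1 + a 2 * a 2 = 0 := by
    simpa [dot3, Fin.sum_univ_three] using haa
  have hbb' : b 0 * b 0 + b 1 * b 1 + b 2 * b 2 = 0 := by
    simpa [dot3, Fin.sum_univ_three] using hbb
  have hab' : a 0 * b 0 + a 1 * b 1 + a 2 * b 2 = μ := by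
    simpa [dot3, Fin.sum_univ_three] using hab
  have han' : a 0 * n 0 + a 1 * n 1 + a 2 * n 2 = 0 := by
    simpa [dot3, Fin.sum_univ_three] using han
  have hbn' : b 0 * n 0 + b 1 * n 1 + b 2 * n 2 = 0 := by
    simpa [dot3, Fin.sum_univ_three] using hbn
  have hnn' : n 0 * n 0 + n 1 * n 1 + n 2 * n 2 = 1 := by
    simpa [dot3, Fin.sum_univ_three] using hnn
  have hva' : v 0 * a 0 + v 1 * a 1 + v 2 * a 2 = cb * μ := by
    simpa [dot3, Fin.sum_univ_three] using hcb
  have hvb' : v 0 * b 0 + v 1 * b 1 + v 2 * b 2 = ca * μ := by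
    simpa [dot3, Fin.sum_univ_three] using hca
  have hvn' : v 0 * n 0 + v 1 * n 1 + v 2 * n 2 = cn := by
    simpa [dot3, Fin.sum_univ_three] using hcn
  set M : Matrix (Fin 3) (Fin 3) ℂ := Matrix.of ![a, b, n] with hM
  have h1 : M * M.transpose = Matrix.of ![![0, μ, 0], ![μ, 0, 0], ![0, 0, 1]] := by
    ext i j
    simp only [Matrix.mul_apply, Matrix.transpose_apply, hM, Matrix.of_apply]
    fin_cases i <;> fin_cases j <;>
      simp [Fin.sum_univ_three, Matrix.vecHead, Matrix.vecTail] <;>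
      first
        | linear_combination haa' | linear_combination hbb' | linear_combination hab'
        | linear_combination han' | linear_combination hbn' | linear_combination hnn'
  have hdet : M.det * M.det = -(μ * μ) := by
    have h2 := congrArg Matrix.det h1
    rw [Matrix.det_mul, Matrix.det_transpose] at h2
    rw [h2, Matrix.det_fin_three]
    simp [Matrix.vecHead, Matrix.vecTail]
    try ring
  have hdetne : M.det ≠ 0 := by
    intro h
    rw [h, mul_zero] at hdet
    exact hμ (by simpa [mul_self_eq_zero] using (neg_eq_zero.mp hdet.symm))
  have hunit : IsUnit M.det := isUnit_iff_ne_zero.mpr hdetne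
  set u : Fin 3 → ℂ := fun i => v i - (ca * a i + cb * b i + cn * n i) with hu
  have hMu : M.mulVec u = 0 := by
    funext i
    fin_cases i <;>
      simp [Matrix.mulVec, dotProduct, Fin.sum_univ_three, hM, hu,
        Matrix.vecHead, Matrix.vecTail, mul_sub, mul_add]
    · linear_combination hva' - ca * haa' - cb * hab' - cn * han'
    · linear_combination hvb' - ca * hab' - cb * hbb' - cn * hbn'
    · linear_combination hvn' - ca * han' - cb * hbn' - cn * hnn'
  have hu0 : u = 0 := by
    have h3 : (M⁻¹ * M).mulVec u = u := by
      rw [Matrix.nonsing_inv_mul M hunit, Matrix.one_mulVec]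
    rw [← h3, ← Matrix.mulVec_mulVec, hMu, Matrix.mulVec_zero]
  intro i
  have := congrFun hu0 i
  simp only [hu, Pi.zero_apply, sub_eq_zero] at this
  exact this


lemma contDiff_dot3 {A B : ℂ → Fin 3 → ℂ} (hA : ∀ i, ContDiff ℝ (⊤ : ℕ∞) (fun w => A w i))
    (hB : ∀ i, ContDiff ℝ (⊤ : ℕ∞) (fun w => B w i)) :
    ContDiff ℝ (⊤ : ℕ∞) (fun w => dot3 (A w) (B w)) := by
  have : (fun w => dot3 (A w) (B w))
      = fun w => A w 0 * B w 0 + (A w 1 * B w 1 + A w 2 * B w 2) := by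
    funext w; simp [dot3, Fin.sum_univ_three]; ring
  rw [this]
  exact ((hA 0).mul (hB 0)).add (((hA 1).mul (hB 1)).add ((hA 2).mul (hB 2)))

lemma wderiv_dot3 {A B : ℂ → Fin 3 → ℂ} (hA : ∀ i, ContDiff ℝ (⊤ : ℕ∞) (fun w => A w i))
    (hB : ∀ i, ContDiff ℝ (⊤ : ℕ∞) (fun w => B w i)) (z : ℂ) :
    wderiv (fun w => dot3 (A w) (B w)) z
      = dot3 (wderiv3 A z) (B z) + dot3 (A z) (wderiv3 B z) := by
  have e : (fun w => dot3 (A w) (B w))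
      = fun w => A w 0 * B w 0 + (A w 1 * B w 1 + A w 2 * B w 2) := by
    funext w; simp [dot3, Fin.sum_univ_three]; ring
  rw [e, wderiv_add ((hA 0).mul (hB 0)).wderiv_diffAt
      (((hA 1).mul (hB 1)).add ((hA 2).mul (hB 2))).wderiv_diffAt,
    wderiv_add ((hA 1).mul (hB 1)).wderiv_diffAt ((hA 2).mul (hB 2)).wderiv_diffAt,
    wderiv_mul (hA 0).wderiv_diffAt (hB 0).wderiv_diffAt,
    wderiv_mul (hA 1).wderiv_diffAt (hB 1).wderiv_diffAt,
    wderiv_mul (hA 2).wderiv_diffAt (hB 2).wderiv_diffAt]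
  simp [dot3, wderiv3, Fin.sum_univ_three]
  ring

lemma dot3_smul_left (c : ℂ) (a b : Fin 3 → ℂ) :
    dot3 (fun i => c * a i) b = c * dot3 a b := by
  simp [dot3, Fin.sum_univ_three]; ring


section toolkit2
variable {f g : ℂ → ℂ} {z : ℂ}

lemma wderiv2_add (hf : ContDiff ℝ (⊤ : ℕ∞) f) (hg : ContDiff ℝ (⊤ : ℕ∞) g) (z : ℂ) :
    wderiv (fun w => wderiv (fun t => f t + g t) w) z
      = wderiv (fun w => wderiv f w) z + wderiv (fun w => wderiv g w) z := by
  have e : (fun w => wderiv (fun t => f t + g t) w) = fun w => wderiv f w + wderiv g w :=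
    funext fun w => wderiv_add hf.wderiv_diffAt hg.wderiv_diffAt
  rw [e, wderiv_add hf.wderiv'.wderiv_diffAt hg.wderiv'.wderiv_diffAt]

lemma wderiv2_mul (hf : ContDiff ℝ (⊤ : ℕ∞) f) (hg : ContDiff ℝ (⊤ : ℕ∞) g) (z : ℂ) :
    wderiv (fun w => wderiv (fun t => f t * g t) w) z
      = wderiv (fun w => wderiv f w) z * g z + 2 * (wderiv f z * wderiv g z)
        + f z * wderiv (fun w => wderiv g w) z := by
  have e : (fun w => wderiv (fun t => f t * g t) w)
      = fun w => wderiv f w * g w + f w * wderiv g w :=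
    funext fun w => wderiv_mul hf.wderiv_diffAt hg.wderiv_diffAt
  rw [e, wderiv_add (hf.wderiv'.mul hg).wderiv_diffAt (hf.mul hg.wderiv').wderiv_diffAt,
    wderiv_mul hf.wderiv'.wderiv_diffAt hg.wderiv_diffAt,
    wderiv_mul hf.wderiv_diffAt hg.wderiv'.wderiv_diffAt]
  ring
end toolkit2

/-- For a conformal immersion `f : Σ → ℝ³` with induced metric `e^λ|dz|²`, unit
normal `ν`, mean curvature `H`, Hopf differential `φ = 2⟨f_zz, ν⟩` and conformal
Gauss map `Y = H·X + N` into the quadric `Q⁴ ⊂ ℝ^{4,1}`, in local complex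
coordinates one has `⟨Y_zz, Y_zz⟩ = φ H_zz − H_z (φ e^{−λ})_z e^λ + φ² H²/4`. -/
theorem stmt_10 (U : Set ℂ) (hU : IsOpen U)
    (f ν : ℂ → Fin 3 → ℝ) (lam H : ℂ → ℝ) (φ : ℂ → ℂ)
    (fC : ℂ → Fin 3 → ℂ) (hfC : ∀ z i, fC z i = (f z i : ℂ))
    (νC : ℂ → Fin 3 → ℂ) (hνC : ∀ z i, νC z i = (ν z i : ℂ))
    (HC : ℂ → ℂ) (hHC : ∀ z, HC z = (H z : ℂ))
    (lamC : ℂ → ℂ) (hlamC : ∀ z, lamC z = (lam z : ℂ))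
    -- smoothness
    (hfsm : ∀ i, ContDiff ℝ (⊤ : ℕ∞) (fun z => fC z i))
    (hνsm : ∀ i, ContDiff ℝ (⊤ : ℕ∞) (fun z => νC z i))
    (hHsm : ContDiff ℝ (⊤ : ℕ∞) HC) (hlamsm : ContDiff ℝ (⊤ : ℕ∞) lamC)
    -- f is conformal with induced metric e^λ |dz|²
    (hconf₁ : ∀ z ∈ U, dot3 (wderiv3 fC z) (wderiv3 fC z) = 0)
    (hconf₂ : ∀ z ∈ U,
      dot3 (wderiv3 fC z) (fun i => (starRingEnd ℂ) (wderiv3 fC z i)) =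
        Complex.exp (lamC z) / 2)
    -- ν is the unit normal
    (hνunit : ∀ z ∈ U, dot3 (νC z) (νC z) = 1)
    (hνperp : ∀ z ∈ U, dot3 (wderiv3 fC z) (νC z) = 0)
    -- H is the mean curvature: f_{z z̄} = (e^λ H / 2) ν
    (hmean : ∀ z ∈ U, ∀ i,
      wderivBar (fun w => wderiv3 fC w i) z = Complex.exp (lamC z) * HC z / 2 * νC z i)
    -- φ is the Hopf differential φ = 2⟨f_zz, ν⟩
    (hHopf : ∀ z ∈ U, φ z = 2 * dot3 (wderiv3 (fun w => wderiv3 fC w) z) (νC z))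
    -- the conformal Gauss map Y = H·X + N
    (X N Y : ℂ → Fin 5 → ℂ)
    (hX : ∀ z, X z = ![fC z 0, fC z 1, fC z 2,
      (dot3 (fC z) (fC z) - 1) / 2, (dot3 (fC z) (fC z) + 1) / 2])
    (hN : ∀ z, N z = ![νC z 0, νC z 1, νC z 2,
      dot3 (fC z) (νC z), dot3 (fC z) (νC z)])
    (hY : ∀ z i, Y z i = HC z * X z i + N z i) :
    ∀ z ∈ U,
      ldot5 (wderiv5 (fun w => wderiv5 Y w) z) (wderiv5 (fun w => wderiv5 Y w) z) =
        φ z * wderiv (fun w => wderiv HC w) z -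
          wderiv HC z * wderiv (fun w => φ w * Complex.exp (-lamC w)) z *
            Complex.exp (lamC z) +
          φ z ^ 2 * HC z ^ 2 / 4 := by
  intro z hz
  -- realness facts
  have hfim : ∀ i (w : ℂ), ((fun t => fC t i) w).im = 0 := by
    intro i w; simp [hfC]
  have hGc : ∀ (w : ℂ) (i : Fin 3),
      (starRingEnd ℂ) (wderiv3 fC w i) = wderivBar (fun t => fC t i) w := by
    intro w i
    exact conj_wderiv_real (hfsm i) (hfim i) w
  have hνreal : ∀ (w : ℂ) (i : Fin 3), (starRingEnd ℂ) (νC w i) = νC w i := by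
    intro w i; simp [hνC]
  -- smoothness
  have hfzsm : ∀ i, ContDiff ℝ (⊤ : ℕ∞) (fun w => wderiv3 fC w i) := fun i => (hfsm i).wderiv'
  have hfzzsm : ∀ i, ContDiff ℝ (⊤ : ℕ∞) (fun w => wderiv3 (wderiv3 fC) w i) := fun i => (hfzsm i).wderiv'
  have hνzsm : ∀ i, ContDiff ℝ (⊤ : ℕ∞) (fun w => wderiv3 νC w i) := fun i => (hνsm i).wderiv'
  have hGsm : ∀ i, ContDiff ℝ (⊤ : ℕ∞) (fun w => (starRingEnd ℂ) (wderiv3 fC w i)) := by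
    intro i
    rw [show (fun w => (starRingEnd ℂ) (wderiv3 fC w i))
        = fun w => wderivBar (fun t => fC t i) w from funext fun w => hGc w i]
    exact (hfsm i).wderivBar'
  have hexpsm : ContDiff ℝ (⊤ : ℕ∞) (fun w => Complex.exp (-lamC w)) :=
    Complex.contDiff_exp.comp hlamsm.neg
  have hPsm : ContDiff ℝ (⊤ : ℕ∞) (fun w => 2 * dot3 (wderiv3 (wderiv3 fC) w) (νC w)) :=
    contDiff_const.mul (contDiff_dot3 hfzzsm hνsm)
  have hkapsm : ContDiff ℝ (⊤ : ℕ∞)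
      (fun w => 2 * dot3 (wderiv3 (wderiv3 fC) w) (νC w) * Complex.exp (-lamC w)) :=
    hPsm.mul hexpsm
  have hSsm : ContDiff ℝ (⊤ : ℕ∞) (fun w => dot3 (fC w) (fC w)) := contDiff_dot3 hfsm hfsm
  have hTsm : ContDiff ℝ (⊤ : ℕ∞) (fun w => dot3 (fC w) (νC w)) := contDiff_dot3 hfsm hνsm
  -- pointwise identities on U
  have hE3 : ∀ w ∈ U, dot3 (fun i => (starRingEnd ℂ) (wderiv3 fC w i))
      (fun i => (starRingEnd ℂ) (wderiv3 fC w i)) = 0 := by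
    intro w hw
    rw [conj_dot3, hconf₁ w hw]; simp
  have hE6 : ∀ w ∈ U, dot3 (fun i => (starRingEnd ℂ) (wderiv3 fC w i)) (νC w) = 0 := by
    intro w hw
    have e : dot3 (fun i => (starRingEnd ℂ) (wderiv3 fC w i)) (νC w)
        = dot3 (fun i => (starRingEnd ℂ) (wderiv3 fC w i)) (fun i => (starRingEnd ℂ) (νC w i)) := by
      congr 1; funext i; rw [hνreal]
    rw [e, conj_dot3, hνperp w hw]; simp
  have hR8 : ∀ w ∈ U, ∀ i, wderiv (fun t => (starRingEnd ℂ) (wderiv3 fC t i)) w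
      = Complex.exp (lamC w) * HC w / 2 * νC w i := by
    intro w hw i
    rw [show (fun t => (starRingEnd ℂ) (wderiv3 fC t i))
        = fun t => wderivBar (fun s => fC s i) t from funext fun t => hGc t i]
    rw [wderiv_wderivBar_comm (hfsm i) w]
    exact hmean w hw i
  have hD3 : ∀ w ∈ U, dot3 (wderiv3 fC w) (wderiv3 νC w)
      = -(dot3 (wderiv3 (wderiv3 fC) w) (νC w)) := by
    intro w hw
    have h0 : wderiv (fun t => dot3 (wderiv3 fC t) (νC t)) w = 0 := by
      rw [wderiv_congr_on hU (fun t ht => hνperp t ht) hw]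
      exact wderiv_const 0 w
    rw [wderiv_dot3 hfzsm hνsm] at h0
    linear_combination h0
  have hD4 : ∀ w ∈ U, dot3 (wderiv3 νC w) (νC w) = 0 := by
    intro w hw
    have h0 : wderiv (fun t => dot3 (νC t) (νC t)) w = 0 := by
      rw [wderiv_congr_on hU (fun t ht => hνunit t ht) hw]
      exact wderiv_const 1 w
    rw [wderiv_dot3 hνsm hνsm] at h0
    rw [dot3_comm (νC w) (wderiv3 νC w)] at h0
    linear_combination h0 / 2
  have hD5 : ∀ w ∈ U, dot3 (fun i => (starRingEnd ℂ) (wderiv3 fC w i)) (wderiv3 νC w)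
      = -(Complex.exp (lamC w) * HC w / 2) := by
    intro w hw
    have h0 : wderiv (fun t => dot3 (fun i => (starRingEnd ℂ) (wderiv3 fC t i)) (νC t)) w = 0 := by
      rw [wderiv_congr_on hU (fun t ht => hE6 t ht) hw]
      exact wderiv_const 0 w
    rw [wderiv_dot3 hGsm hνsm] at h0
    have e : wderiv3 (fun t i => (starRingEnd ℂ) (wderiv3 fC t i)) w
        = fun i => Complex.exp (lamC w) * HC w / 2 * νC w i := funext fun i => hR8 w hw i
    rw [e, dot3_smul_left, hνunit w hw] at h0
    linear_combination h0
  have hexpinv : ∀ w : ℂ, Complex.exp (-lamC w) * Complex.exp (lamC w) = 1 := by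
    intro w; rw [← Complex.exp_add]; simp
  -- the Weingarten-type equation for ν_z
  have hV2 : ∀ w ∈ U, ∀ i, wderiv3 νC w i
      = -(HC w * wderiv3 fC w i)
        - 2 * dot3 (wderiv3 (wderiv3 fC) w) (νC w) * Complex.exp (-lamC w)
          * (starRingEnd ℂ) (wderiv3 fC w i) := by
    intro w hw
    have key := basis_expand (wderiv3 fC w) (fun i => (starRingEnd ℂ) (wderiv3 fC w i)) (νC w)
      (wderiv3 νC w) (Complex.exp (lamC w) / 2)
      (div_ne_zero (Complex.exp_ne_zero _) two_ne_zero)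
      (hconf₁ w hw) (hE3 w hw) (hconf₂ w hw) (hνperp w hw) (hE6 w hw) (hνunit w hw)
      (-(HC w)) (-(2 * dot3 (wderiv3 (wderiv3 fC) w) (νC w) * Complex.exp (-lamC w))) 0
      (by rw [dot3_comm, hD5 w hw]; ring)
      (by rw [dot3_comm, hD3 w hw]
          have h1 := hexpinv w
          linear_combination (dot3 (wderiv3 (wderiv3 fC) w) (νC w)) * h1)
      (hD4 w hw)
    intro i
    rw [key i]; ring
  have hV3 : ∀ i, wderiv3 (wderiv3 νC) z i
      = -(wderiv HC z * wderiv3 fC z i + HC z * wderiv3 (wderiv3 fC) z i)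
        - (wderiv (fun w => 2 * dot3 (wderiv3 (wderiv3 fC) w) (νC w) * Complex.exp (-lamC w)) z
             * (starRingEnd ℂ) (wderiv3 fC z i)
           + 2 * dot3 (wderiv3 (wderiv3 fC) z) (νC z) * Complex.exp (-lamC z)
             * (Complex.exp (lamC z) * HC z / 2 * νC z i)) := by
    intro i
    have e1 : wderiv3 (wderiv3 νC) z i
        = wderiv (fun w => -(HC w * wderiv3 fC w i)
            - 2 * dot3 (wderiv3 (wderiv3 fC) w) (νC w) * Complex.exp (-lamC w)
              * (starRingEnd ℂ) (wderiv3 fC w i)) z :=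
      wderiv_congr_on hU (fun w hw => hV2 w hw i) hz
    rw [e1, wderiv_sub ((hHsm.mul (hfzsm i)).neg).wderiv_diffAt
        (hkapsm.mul (hGsm i)).wderiv_diffAt,
      wderiv_neg, wderiv_mul hHsm.wderiv_diffAt (hfzsm i).wderiv_diffAt,
      wderiv_mul hkapsm.wderiv_diffAt (hGsm i).wderiv_diffAt, hR8 z hz i]
    simp only [wderiv3]
  -- components of Y
  have hY0f : (fun w => Y w 0) = fun w => HC w * fC w 0 + νC w 0 := by
    funext w; rw [hY w 0, hX w, hN w]; simp
  have hY1f : (fun w => Y w 1) = fun w => HC w * fC w 1 + νC w 1 := by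
    funext w; rw [hY w 1, hX w, hN w]; simp
  have hY2f : (fun w => Y w 2) = fun w => HC w * fC w 2 + νC w 2 := by
    funext w; rw [hY w 2, hX w, hN w]; simp
  have hY3f : (fun w => Y w 3)
      = fun w => HC w * ((dot3 (fC w) (fC w) - 1) / 2) + dot3 (fC w) (νC w) := by
    funext w; rw [hY w 3, hX w, hN w]; simp
  have hY4f : (fun w => Y w 4)
      = fun w => HC w * ((dot3 (fC w) (fC w) + 1) / 2) + dot3 (fC w) (νC w) := by
    funext w; rw [hY w 4, hX w, hN w]; simp
  -- first and second derivatives of S = |f|² and T = f·ν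
  have hSd : ∀ w : ℂ, wderiv (fun t => dot3 (fC t) (fC t)) w
      = dot3 (wderiv3 fC w) (fC w) + dot3 (fC w) (wderiv3 fC w) :=
    fun w => wderiv_dot3 hfsm hfsm w
  have hS2 : wderiv (fun w => wderiv (fun t => dot3 (fC t) (fC t)) w) z
      = dot3 (wderiv3 (wderiv3 fC) z) (fC z) + dot3 (wderiv3 fC z) (wderiv3 fC z)
        + (dot3 (wderiv3 fC z) (wderiv3 fC z) + dot3 (fC z) (wderiv3 (wderiv3 fC) z)) := by
    rw [show (fun w => wderiv (fun t => dot3 (fC t) (fC t)) w)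
        = fun w => dot3 (wderiv3 fC w) (fC w) + dot3 (fC w) (wderiv3 fC w) from funext hSd,
      wderiv_add (contDiff_dot3 hfzsm hfsm).wderiv_diffAt
        (contDiff_dot3 hfsm hfzsm).wderiv_diffAt,
      wderiv_dot3 hfzsm hfsm, wderiv_dot3 hfsm hfzsm]
  have hTd : ∀ w : ℂ, wderiv (fun t => dot3 (fC t) (νC t)) w
      = dot3 (wderiv3 fC w) (νC w) + dot3 (fC w) (wderiv3 νC w) :=
    fun w => wderiv_dot3 hfsm hνsm w
  have hT2 : wderiv (fun w => wderiv (fun t => dot3 (fC t) (νC t)) w) z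
      = dot3 (wderiv3 (wderiv3 fC) z) (νC z) + dot3 (wderiv3 fC z) (wderiv3 νC z)
        + (dot3 (wderiv3 fC z) (wderiv3 νC z) + dot3 (fC z) (wderiv3 (wderiv3 νC) z)) := by
    rw [show (fun w => wderiv (fun t => dot3 (fC t) (νC t)) w)
        = fun w => dot3 (wderiv3 fC w) (νC w) + dot3 (fC w) (wderiv3 νC w) from funext hTd,
      wderiv_add (contDiff_dot3 hfzsm hνsm).wderiv_diffAt
        (contDiff_dot3 hfsm hνzsm).wderiv_diffAt,
      wderiv_dot3 hfzsm hνsm, wderiv_dot3 hfsm hνzsm]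
  have hg1m : ∀ w : ℂ, wderiv (fun t => (dot3 (fC t) (fC t) - 1) / 2) w
      = wderiv (fun t => dot3 (fC t) (fC t)) w / 2 := by
    intro w
    rw [wderiv_div_const (hSsm.sub contDiff_const).wderiv_diffAt,
      wderiv_sub hSsm.wderiv_diffAt (differentiableAt_const 1), wderiv_const]
    ring
  have hg2m : wderiv (fun w => wderiv (fun t => (dot3 (fC t) (fC t) - 1) / 2) w) z
      = wderiv (fun w => wderiv (fun t => dot3 (fC t) (fC t)) w) z / 2 := by
    rw [show (fun w => wderiv (fun t => (dot3 (fC t) (fC t) - 1) / 2) w)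
        = fun w => wderiv (fun t => dot3 (fC t) (fC t)) w / 2 from funext hg1m,
      wderiv_div_const hSsm.wderiv'.wderiv_diffAt]
  have hg1p : ∀ w : ℂ, wderiv (fun t => (dot3 (fC t) (fC t) + 1) / 2) w
      = wderiv (fun t => dot3 (fC t) (fC t)) w / 2 := by
    intro w
    rw [wderiv_div_const (hSsm.add contDiff_const).wderiv_diffAt,
      wderiv_add hSsm.wderiv_diffAt (differentiableAt_const 1), wderiv_const]
    ring
  have hg2p : wderiv (fun w => wderiv (fun t => (dot3 (fC t) (fC t) + 1) / 2) w) z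
      = wderiv (fun w => wderiv (fun t => dot3 (fC t) (fC t)) w) z / 2 := by
    rw [show (fun w => wderiv (fun t => (dot3 (fC t) (fC t) + 1) / 2) w)
        = fun w => wderiv (fun t => dot3 (fC t) (fC t)) w / 2 from funext hg1p,
      wderiv_div_const hSsm.wderiv'.wderiv_diffAt]
  -- second derivatives of the components of Y
  have hA0 : wderiv5 (fun w => wderiv5 Y w) z 0
      = wderiv (fun w => wderiv HC w) z * fC z 0
        + 2 * (wderiv HC z * wderiv (fun t => fC t 0) z)
        + HC z * wderiv (fun w => wderiv (fun t => fC t 0) w) z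
        + wderiv (fun w => wderiv (fun t => νC t 0) w) z := by
    show wderiv (fun w => wderiv (fun t => Y t 0) w) z = _
    rw [hY0f, wderiv2_add (hHsm.mul (hfsm 0)) (hνsm 0) z, wderiv2_mul hHsm (hfsm 0) z]
  have hA1 : wderiv5 (fun w => wderiv5 Y w) z 1
      = wderiv (fun w => wderiv HC w) z * fC z 1
        + 2 * (wderiv HC z * wderiv (fun t => fC t 1) z)
        + HC z * wderiv (fun w => wderiv (fun t => fC t 1) w) z
        + wderiv (fun w => wderiv (fun t => νC t 1) w) z := by
    show wderiv (fun w => wderiv (fun t => Y t 1) w) z = _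
    rw [hY1f, wderiv2_add (hHsm.mul (hfsm 1)) (hνsm 1) z, wderiv2_mul hHsm (hfsm 1) z]
  have hA2 : wderiv5 (fun w => wderiv5 Y w) z 2
      = wderiv (fun w => wderiv HC w) z * fC z 2
        + 2 * (wderiv HC z * wderiv (fun t => fC t 2) z)
        + HC z * wderiv (fun w => wderiv (fun t => fC t 2) w) z
        + wderiv (fun w => wderiv (fun t => νC t 2) w) z := by
    show wderiv (fun w => wderiv (fun t => Y t 2) w) z = _
    rw [hY2f, wderiv2_add (hHsm.mul (hfsm 2)) (hνsm 2) z, wderiv2_mul hHsm (hfsm 2) z]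
  have hA3 : wderiv5 (fun w => wderiv5 Y w) z 3
      = wderiv (fun w => wderiv HC w) z * ((dot3 (fC z) (fC z) - 1) / 2)
        + 2 * (wderiv HC z * (wderiv (fun t => dot3 (fC t) (fC t)) z / 2))
        + HC z * (wderiv (fun w => wderiv (fun t => dot3 (fC t) (fC t)) w) z / 2)
        + wderiv (fun w => wderiv (fun t => dot3 (fC t) (νC t)) w) z := by
    show wderiv (fun w => wderiv (fun t => Y t 3) w) z = _
    rw [hY3f, wderiv2_add (hHsm.mul ((hSsm.sub contDiff_const).div_const 2)) hTsm z,
      wderiv2_mul hHsm ((hSsm.sub contDiff_const).div_const 2) z, hg1m z, hg2m]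
  have hA4 : wderiv5 (fun w => wderiv5 Y w) z 4
      = wderiv (fun w => wderiv HC w) z * ((dot3 (fC z) (fC z) + 1) / 2)
        + 2 * (wderiv HC z * (wderiv (fun t => dot3 (fC t) (fC t)) z / 2))
        + HC z * (wderiv (fun w => wderiv (fun t => dot3 (fC t) (fC t)) w) z / 2)
        + wderiv (fun w => wderiv (fun t => dot3 (fC t) (νC t)) w) z := by
    show wderiv (fun w => wderiv (fun t => Y t 4) w) z = _
    rw [hY4f, wderiv2_add (hHsm.mul ((hSsm.add contDiff_const).div_const 2)) hTsm z,
      wderiv2_mul hHsm ((hSsm.add contDiff_const).div_const 2) z, hg1p z, hg2p]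
  -- assemble
  have hKZ : wderiv (fun w => φ w * Complex.exp (-lamC w)) z
      = wderiv (fun w => 2 * dot3 (wderiv3 (wderiv3 fC) w) (νC w) * Complex.exp (-lamC w)) z :=
    wderiv_congr_on hU (fun w hw => by rw [hHopf w hw]) hz
  rw [hKZ, hHopf z hz]
  simp only [ldot5]
  rw [hA0, hA1, hA2, hA3, hA4, hSd z, hS2, hT2]
  have rc1 := hconf₁ z hz
  have rc2 := hconf₂ z hz
  have rc3 := hE3 z hz
  have rc4 := hνunit z hz
  have rc5 := hνperp z hz
  have rc6 := hE6 z hz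
  have rc7 := hexpinv z
  have rc80 := hV2 z hz 0
  have rc81 := hV2 z hz 1
  have rc82 := hV2 z hz 2
  have rc90 := hV3 0
  have rc91 := hV3 1
  have rc92 := hV3 2
  simp only [wderiv3, dot3, Fin.sum_univ_three] at rc1 rc2 rc3 rc4 rc5 rc6 rc80 rc81 rc82 rc90 rc91 rc92 ⊢
  rw [rc80, rc81, rc82, rc90, rc91, rc92]
  linear_combination (2 * (wderiv (fun w => wderiv HC w) z) * (HC z) + (wderiv HC z)^2) * rc1 + (4 * (wderiv (fun w => wderiv HC w) z) * ((2 * (wderiv (fun x => wderiv (fun y => fC y 0) x) z * νC z 0 + wderiv (fun x => wderiv (fun y => fC y 1) x) z * νC z 1 + wderiv (fun x => wderiv (fun y => fC y 2) x) z * νC z 2)) * (Complex.exp (-lamC z))) - 2 * (wderiv HC z) * (wderiv (fun w => 2 * (wderiv (fun x => wderiv (fun y => fC y 0) x) w * νC w 0 + wderiv (fun x => wderiv (fun y => fC y 1) x) w * νC w 1 + wderiv (fun x => wderiv (fun y => fC y 2) x) w * νC w 2) * Complex.exp (-lamC w)) z)) * rc2 + (wderiv (fun w => 2 * (wderiv (fun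 x => wderiv (fun y => fC y 0) x) w * νC w 0 + wderiv (fun x => wderiv (fun y => fC y 1) x) w * νC w 1 + wderiv (fun x => wderiv (fun y => fC y 2) x) w * νC w 2) * Complex.exp (-lamC w)) z)^2 * rc3 + (((2 * (wderiv (fun x => wderiv (fun y => fC y 0) x) z * νC z 0 + wderiv (fun x => wderiv (fun y => fC y 1) x) z * νC z 1 + wderiv (fun x => wderiv (fun y => fC y 2) x) z * νC z 2)) * (Complex.exp (-lamC z)))^2 * (Complex.exp (lamC z))^2 * (HC z)^2 / 4) * rc4 + (-((wderiv HC z) * ((2 * (wderiv (fun x => wderiv (fun y => fC y 0) x) z * νC z 0 + wderiv (fun x => wderiv (fun y => fC y 1) x) z * νC z 1 + wderiv (fun x => wderiv (fun y => fC y 2) x) z * νC z 2)) * (Complex.exp (-lamC z))) * (Complex.exp (lamC z)) * (HC z))) * rc5 + ((wderiv (fun w => 2 * (wderiv (fun x => wderiv (fun y => fC y 0) x) w * νC w 0 + wderiv (fun x => wderiv (fun y => fC y 1) x) w * νC w 1 + wderiv (fun x => wderiv (fun y => fC y 2) x) w * νC w 2) * Complex.exp (-lamC w)) z) * ((2 *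 (wderiv (fun x => wderiv (fun y => fC y 0) x) z * νC z 0 + wderiv (fun x => wderiv (fun y => fC y 1) x) z * νC z 1 + wderiv (fun x => wderiv (fun y => fC y 2) x) z * νC z 2)) * (Complex.exp (-lamC z))) * (Complex.exp (lamC z)) * (HC z)) * rc6 + (2 * (wderiv (fun w => wderiv HC w) z) * (2 * (wderiv (fun x => wderiv (fun y => fC y 0) x) z * νC z 0 + wderiv (fun x => wderiv (fun y => fC y 1) x) z * νC z 1 + wderiv (fun x => wderiv (fun y => fC y 2) x) z * νC z 2)) + (HC z)^2 / 4 * (2 * (wderiv (fun x => wderiv (fun y => fC y 0) x) z * νC z 0 + wderiv (fun x => wderiv (fun y => fC y 1) x) z * νC z 1 + wderiv (fun x => wderiv (fun y => fC y 2) x) z * νC z 2))^2 * ((Complex.exp (-lamC z)) * (Complex.exp (lamC z)) + 1)) * rc7
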